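/- arXiv:1005.4368 — 5 statements merged into one kernel-verified Lean document; each statement's English description precedes it below -/
import Mathlib

section
/- Let m ≥ 2 and k ≥ 1 be integers, and let d be a positive divisor of m^k − 1. Let τ : ℕ^k → ℕ be a symmetric function (invariant under every permutation of its k arguments) satisfying τ(m·q + b, x₂, …, x_{k−1}, x_k) ≥ τ(b, x₂, …, x_{k−1}, x_k + q) for all q ≥ 1, all 0 ≤ b < m, and all x₂, …, x_k ∈ ℕ. For 0 ≤ h < m^k with base-m expansion h = c₁·m^{k−1} + c₂·m^{k−2} + ⋯ + c_k (each 0 ≤ c_i < m), write τ°(h) = τ(c₁, c₂, …, c_k). If a₁, …, a_k ∈ ℕ are not all zero and a₁·m^{k−1} + a₂·m^{k−2} + ⋯ + a_{k−1}·m + a_k ≡ 0 (mod d), then τ(a₁, …, a_k) ≥ min over 1 ≤ t ≤ (m^k − 1)/d of τ°(t·d). -/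
/-! Write `V(x) = ∑ⱼ xⱼ m^(k-1-j)` for the number with base-`m` "digits" `x`, allowed to be `≥ m`.
Since `d ∣ m^k - 1`, the condition `d ∣ V(x)` survives two moves: rotating `x` cyclically (which
multiplies `V(x)` by `m` modulo `m^k - 1`), and a wrap-around carry, replacing a first entry
`m q + b` by `b` and adding `q` to the last entry (which lowers `V(x)` by `q (m^k - 1)`). Rotations
leave `τ` unchanged by symmetry, carries do not increase it by hypothesis, and carries strictly
lower `∑ xᵢ`. Rotating each entry `≥ m` to the front and carrying it therefore ends in a nonzero
digit vector `c` with `τ c ≤ τ a` and `d ∣ V(c) < m^k`, and `c` is the base-`m` expansion of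
`t d` for `t = V(c) / d`. -/

open Finset Function

theorem Finset.sum_update_mul_add {ι R : Type*} [Fintype ι] [DecidableEq ι] [CommSemiring R]
    (x w : ι → R) (i : ι) (v : R) :
    ∑ j, update x i v j * w j + x i * w i = ∑ j, x j * w j + v * w i := by
  rw [← add_sum_erase _ _ (mem_univ i), ← add_sum_erase _ _ (mem_univ i), update_self,
    sum_congr rfl fun j hj => by rw [update_of_ne (ne_of_mem_erase hj)]]
  ring

def ofDigitsFin (m : ℕ) {k : ℕ} (x : Fin k → ℕ) : ℕ :=
  ∑ j, x j * m ^ (k - 1 - (j : ℕ))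

section ofDigitsFin

variable {m n : ℕ}

theorem ofDigitsFin_eq_mul_init_add (x : Fin (n + 1) → ℕ) :
    ofDigitsFin m x = m * ofDigitsFin m (Fin.init x) + x (Fin.last n) := by
  rw [ofDigitsFin, ofDigitsFin, Fin.sum_univ_castSucc, mul_sum]
  simp only [Fin.val_castSucc, Fin.val_last, Fin.init, add_tsub_cancel_right, tsub_self, pow_zero,
    mul_one]
  congr 1
  refine sum_congr rfl fun i _ => ?_
  rw [show n - (i : ℕ) = n - 1 - i + 1 by omega, pow_succ]
  ring

theorem ofDigitsFin_eq_mul_pow_add_tail (x : Fin (n + 1) → ℕ) :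
    ofDigitsFin m x = x 0 * m ^ n + ofDigitsFin m (Fin.tail x) := by
  rw [ofDigitsFin, ofDigitsFin, Fin.sum_univ_succ]
  simp only [Fin.val_zero, Fin.val_succ, Fin.tail, add_tsub_cancel_right, tsub_zero]
  congr 2
  ext
  congr 2
  omega

theorem sum_le_ofDigitsFin (hm : 1 ≤ m) {k : ℕ} (x : Fin k → ℕ) : ∑ i, x i ≤ ofDigitsFin m x :=
  sum_le_sum fun _ _ => Nat.le_mul_of_pos_right _ (Nat.pow_pos hm)

theorem ofDigitsFin_lt_pow {k : ℕ} {x : Fin k → ℕ} (hx : ∀ i, x i < m) :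
    ofDigitsFin m x < m ^ k := by
  induction k with
  | zero => simp [ofDigitsFin]
  | succ k ih =>
    have hinit := ih fun i => hx (Fin.castSucc i)
    rw [ofDigitsFin_eq_mul_init_add, pow_succ']
    calc m * ofDigitsFin m (Fin.init x) + x (Fin.last k)
        < m * ofDigitsFin m (Fin.init x) + m := by linarith [hx (Fin.last k)]
      _ = m * (ofDigitsFin m (Fin.init x) + 1) := by ring
      _ ≤ m * m ^ k := Nat.mul_le_mul_left _ hinit

theorem ofDigitsFin_div_pow_mod {k : ℕ} {x : Fin k → ℕ} (hx : ∀ i, x i < m) (i : Fin k) :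
    ofDigitsFin m x / m ^ (k - 1 - (i : ℕ)) % m = x i := by
  induction k with
  | zero => exact i.elim0
  | succ k ih =>
    have hm : 0 < m := (Nat.zero_le _).trans_lt (hx i)
    have hdiv : ofDigitsFin m x / m = ofDigitsFin m (Fin.init x) := by
      rw [ofDigitsFin_eq_mul_init_add, Nat.mul_add_div hm, Nat.div_eq_of_lt (hx _), add_zero]
    induction i using Fin.lastCases with
    | last => simp [ofDigitsFin_eq_mul_init_add, Nat.mod_eq_of_lt (hx _)]
    | cast i =>
      rw [Fin.val_castSucc, show k + 1 - 1 - (i : ℕ) = k - 1 - i + 1 by omega, pow_succ',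
        ← Nat.div_div_eq_div_mul, hdiv]
      exact ih (fun j => hx j.castSucc) i

theorem ofDigitsFin_comp_finRotate_add (hm : 0 < m) (x : Fin (n + 1) → ℕ) :
    ofDigitsFin m (x ∘ finRotate (n + 1)) + x 0 * (m ^ (n + 1) - 1) = m * ofDigitsFin m x := by
  have hinit : Fin.init (x ∘ finRotate (n + 1)) = Fin.tail x := by
    ext i
    simp [Fin.init, Fin.tail, Fin.coeSucc_eq_succ]
  have hpow : x 0 * (m ^ (n + 1) - 1) + x 0 = x 0 * (m * m ^ n) := by
    rw [← Nat.mul_add_one, Nat.sub_add_cancel (Nat.one_le_pow _ _ hm), pow_succ']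
  rw [ofDigitsFin_eq_mul_init_add, hinit, comp_apply, finRotate_last,
    ofDigitsFin_eq_mul_pow_add_tail (x := x)]
  linarith

end ofDigitsFin

theorem finRotate_pow_val_apply_zero {n : ℕ} (j : Fin (n + 1)) :
    (finRotate (n + 1) ^ (j : ℕ)) 0 = j := by
  induction j using Fin.induction with
  | zero => rfl
  | succ j ih =>
    rw [Fin.val_succ, ← Fin.val_castSucc, pow_succ', Equiv.Perm.mul_apply, ih, finRotate_apply,
      Fin.coeSucc_eq_succ]

theorem dvd_ofDigitsFin_comp_finRotate_pow {m n d : ℕ} (hm : 0 < m) (hd : d ∣ m ^ (n + 1) - 1)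
    {x : Fin (n + 1) → ℕ} (hx : d ∣ ofDigitsFin m x) (r : ℕ) :
    d ∣ ofDigitsFin m (x ∘ ⇑(finRotate (n + 1) ^ r)) := by
  induction r with
  | zero => simpa using hx
  | succ r ih =>
    rw [pow_succ, Equiv.Perm.coe_mul, ← comp_assoc]
    have h := ofDigitsFin_comp_finRotate_add hm (x ∘ ⇑(finRotate (n + 1) ^ r))
    exact (Nat.dvd_add_left (dvd_mul_of_dvd_right hd _)).mp (h ▸ dvd_mul_of_dvd_right ih m)

def carry {n : ℕ} (x : Fin (n + 1) → ℕ) (q b : ℕ) : Fin (n + 1) → ℕ :=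
  update (update x 0 b) (Fin.last n) (update x 0 b (Fin.last n) + q)

section carry

variable {m n : ℕ} (x : Fin (n + 1) → ℕ) (q b : ℕ)

theorem sum_carry_add : ∑ i, carry x q b i + x 0 = ∑ i, x i + b + q := by
  have h1 := sum_update_mul_add x 1 0 b
  have h2 := sum_update_mul_add (update x 0 b) 1 (Fin.last n) (update x 0 b (Fin.last n) + q)
  simp only [Pi.one_apply, mul_one] at h1 h2
  rw [carry]
  omega

theorem ofDigitsFin_carry_add :
    ofDigitsFin m (carry x q b) + x 0 * m ^ n = ofDigitsFin m x + b * m ^ n + q := by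
  have h1 := sum_update_mul_add x (fun j : Fin (n + 1) => m ^ (n + 1 - 1 - (j : ℕ))) 0 b
  have h2 := sum_update_mul_add (update x 0 b) (fun j : Fin (n + 1) => m ^ (n + 1 - 1 - (j : ℕ)))
    (Fin.last n) (update x 0 b (Fin.last n) + q)
  rw [ofDigitsFin, ofDigitsFin, carry]
  simp only [Fin.val_zero, Fin.val_last, add_tsub_cancel_right, tsub_zero, tsub_self, pow_zero,
    mul_one] at h1 h2 ⊢
  linarith

theorem dvd_ofDigitsFin_carry {d : ℕ} (hm : 0 < m) (hd : d ∣ m ^ (n + 1) - 1)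
    (hx : d ∣ ofDigitsFin m x) (hqb : x 0 = m * q + b) : d ∣ ofDigitsFin m (carry x q b) := by
  have h := ofDigitsFin_carry_add (m := m) x q b
  have hpow : q * (m ^ (n + 1) - 1) + q = q * (m * m ^ n) := by
    rw [← Nat.mul_add_one, Nat.sub_add_cancel (Nat.one_le_pow _ _ hm), pow_succ']
  have hval : ofDigitsFin m (carry x q b) + q * (m ^ (n + 1) - 1) = ofDigitsFin m x := by
    rw [hqb] at h
    nlinarith
  exact (Nat.dvd_add_left (dvd_mul_of_dvd_right hd _)).mp (hval ▸ hx)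

theorem sum_carry_lt (hm : 2 ≤ m) (hq : 1 ≤ q) (hqb : x 0 = m * q + b) :
    ∑ i, carry x q b i < ∑ i, x i := by
  have h := sum_carry_add x q b
  nlinarith

theorem sum_carry_pos (hq : 1 ≤ q) : 0 < ∑ i, carry x q b i :=
  calc 0 < carry x q b (Fin.last n) := by simp only [carry, update_self]; omega
    _ ≤ ∑ i, carry x q b i := single_le_sum (fun i _ => Nat.zero_le _) (mem_univ _)

end carry

section descent

variable {m d n : ℕ} {τ : (Fin (n + 1) → ℕ) → ℕ}

theorem exists_carry_lt (hm : 2 ≤ m) (hd : d ∣ m ^ (n + 1) - 1)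
    (hsym : ∀ (x : Fin (n + 1) → ℕ) (σ : Equiv.Perm (Fin (n + 1))), τ (x ∘ σ) = τ x)
    (hcarry : ∀ (x : Fin (n + 1) → ℕ) (q b : ℕ), 1 ≤ q → b < m →
      τ (carry x q b) ≤ τ (update x 0 (m * q + b)))
    {x : Fin (n + 1) → ℕ} (hx : d ∣ ofDigitsFin m x) {j : Fin (n + 1)} (hj : m ≤ x j) :
    ∃ y, d ∣ ofDigitsFin m y ∧ 0 < ∑ i, y i ∧ ∑ i, y i < ∑ i, x i ∧ τ y ≤ τ x := by
  set x' := x ∘ ⇑(finRotate (n + 1) ^ (j : ℕ))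
  have hx'0 : x' 0 = m * (x j / m) + x j % m := by
    simp [x', finRotate_pow_val_apply_zero, Nat.div_add_mod]
  have hq : 1 ≤ x j / m := (Nat.one_le_div_iff (by omega)).mpr hj
  refine ⟨carry x' (x j / m) (x j % m),
    dvd_ofDigitsFin_carry _ _ _ (by omega) hd
      (dvd_ofDigitsFin_comp_finRotate_pow (by omega) hd hx _) hx'0,
    sum_carry_pos _ _ _ hq, ?_, ?_⟩
  · calc ∑ i, carry x' (x j / m) (x j % m) i < ∑ i, x' i := sum_carry_lt _ _ _ hm hq hx'0
      _ = ∑ i, x i := Equiv.sum_comp _ x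
  · calc τ (carry x' (x j / m) (x j % m))
        ≤ τ (update x' 0 (m * (x j / m) + x j % m)) := hcarry _ _ _ hq (Nat.mod_lt _ (by omega))
      _ = τ x' := by rw [← hx'0, update_eq_self]
      _ = τ x := hsym x _

theorem exists_digits_le (hm : 2 ≤ m) (hd : d ∣ m ^ (n + 1) - 1)
    (hsym : ∀ (x : Fin (n + 1) → ℕ) (σ : Equiv.Perm (Fin (n + 1))), τ (x ∘ σ) = τ x)
    (hcarry : ∀ (x : Fin (n + 1) → ℕ) (q b : ℕ), 1 ≤ q → b < m →
      τ (carry x q b) ≤ τ (update x 0 (m * q + b)))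
    {x : Fin (n + 1) → ℕ} (hx : d ∣ ofDigitsFin m x) (hpos : 0 < ∑ i, x i) :
    ∃ c : Fin (n + 1) → ℕ, (∀ i, c i < m) ∧ d ∣ ofDigitsFin m c ∧ 0 < ∑ i, c i ∧ τ c ≤ τ x := by
  induction hs : ∑ i, x i using Nat.strong_induction_on generalizing x with
  | _ s ih =>
    by_cases hsmall : ∀ i, x i < m
    · exact ⟨x, hsmall, hx, hpos, le_rfl⟩
    push Not at hsmall
    obtain ⟨j, hj⟩ := hsmall
    obtain ⟨y, hyd, hypos, hylt, hyτ⟩ := exists_carry_lt hm hd hsym hcarry hx hj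
    obtain ⟨c, hcm, hcd, hcpos, hcτ⟩ := ih _ (hs ▸ hylt) hyd hypos rfl
    exact ⟨c, hcm, hcd, hcpos, hcτ.trans hyτ⟩

end descent

/-- **Theorem 1 of the paper.** Let `m ≥ 2`, `k ≥ 1`, and let `d` be a positive divisor of
`m^k - 1`. Let `τ : ℕ^k → ℕ` be symmetric and satisfy
`τ(m·q + b, x₂, …, x_k) ≥ τ(b, x₂, …, x_k + q)` for all `q ≥ 1`, `0 ≤ b < m`.
For `0 ≤ t·d < m^k` with base-`m` digits `c₁, …, c_k` (so `cⱼ = (t·d) / m^{k-j} % m`),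
write `τ°(t·d) = τ(c₁, …, c_k)`.  If `a₁, …, a_k ∈ ℕ` are not all zero and
`a₁·m^{k-1} + ⋯ + a_k ≡ 0 (mod d)`, then
`τ(a₁, …, a_k) ≥ min_{1 ≤ t ≤ (m^k-1)/d} τ°(t·d)`, i.e. some `t` in that range has
`τ°(t·d) ≤ τ(a₁, …, a_k)`. -/
theorem tau_ge_min (m k d : ℕ) (hm : 2 ≤ m) (hk : 1 ≤ k)
    (hd : 0 < d) (hdvd : d ∣ m ^ k - 1)
    (τ : (Fin k → ℕ) → ℕ)
    (hsym : ∀ (x : Fin k → ℕ) (σ : Equiv.Perm (Fin k)), τ (x ∘ σ) = τ x)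
    (hτ : ∀ (x : Fin k → ℕ) (q b : ℕ), 1 ≤ q → b < m →
      τ (Function.update (Function.update x ⟨0, by omega⟩ b) ⟨k - 1, by omega⟩
          ((Function.update x ⟨0, by omega⟩ b) ⟨k - 1, by omega⟩ + q))
        ≤ τ (Function.update x ⟨0, by omega⟩ (m * q + b)))
    (a : Fin k → ℕ) (ha : ∃ j, a j ≠ 0)
    (hcong : d ∣ ∑ j : Fin k, a j * m ^ (k - 1 - (j : ℕ))) :
    ∃ t, 1 ≤ t ∧ t ≤ (m ^ k - 1) / d ∧
      τ (fun j => t * d / m ^ (k - 1 - (j : ℕ)) % m) ≤ τ a := by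
  obtain ⟨n, rfl⟩ : ∃ n, k = n + 1 := ⟨k - 1, by omega⟩
  have hlast : (⟨n + 1 - 1, by omega⟩ : Fin (n + 1)) = Fin.last n := Fin.ext (by simp)
  have hcarry : ∀ (x : Fin (n + 1) → ℕ) (q b : ℕ), 1 ≤ q → b < m →
      τ (carry x q b) ≤ τ (update x 0 (m * q + b)) := by
    simpa only [carry, Fin.zero_eta, hlast] using hτ
  have hpos : 0 < ∑ i, a i := by
    obtain ⟨j, hj⟩ := ha
    exact sum_pos' (fun _ _ => Nat.zero_le _) ⟨j, mem_univ _, Nat.pos_of_ne_zero hj⟩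
  obtain ⟨c, hcm, hcd, hcpos, hcτ⟩ := exists_digits_le hm hdvd hsym hcarry hcong hpos
  have hcval : 0 < ofDigitsFin m c := hcpos.trans_le (sum_le_ofDigitsFin (by omega) c)
  refine ⟨ofDigitsFin m c / d, (Nat.one_le_div_iff hd).mpr (Nat.le_of_dvd hcval hcd),
    Nat.div_le_div_right (Nat.le_sub_one_of_lt (ofDigitsFin_lt_pow hcm)), ?_⟩
  rw [Nat.div_mul_cancel hcd]
  convert hcτ using 2
  exact funext (ofDigitsFin_div_pow_mod hcm)
end

section
/- Let m ≥ 2 and k ≥ 1 be integers, and let a₁, …, a_k ∈ ℕ be not all zero. If a₁·m^{k−1} + a₂·m^{k−2} + ⋯ + a_{k−1}·m + a_k ≡ 0 (mod (m^k − 1)/(m − 1)), then the sum over j = 1, …, k of ⌈a_j / m⌉ is at least k. -/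
open Finset

private lemma sum_split {M : Type*} [AddCommMonoid M] (F : ℕ → M) {s : Finset ℕ} {i j : ℕ}
    (hi : i ∈ s) (hj : j ∈ s) (hij : i ≠ j) :
    ∑ x ∈ s, F x = F i + F j + ∑ x ∈ (s.erase i).erase j, F x := by
  rw [add_assoc, Finset.add_sum_erase _ _ (Finset.mem_erase.mpr ⟨hij.symm, hj⟩),
    Finset.add_sum_erase _ _ hi]

private lemma digits_lt (m : ℕ) (hm : 1 ≤ m) (k : ℕ) (b : ℕ → ℕ) (hb : ∀ i < k, b i < m) :
    ∑ i ∈ range k, b i * m ^ i < m ^ k := by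
  have h1 : ∑ i ∈ range k, b i * m ^ i ≤ ∑ i ∈ range k, m ^ i * (m - 1) := by
    apply Finset.sum_le_sum
    intro i hi
    rw [mul_comm]
    have hbi := hb i (mem_range.mp hi)
    exact Nat.mul_le_mul le_rfl (by omega)
  rw [← Finset.sum_mul] at h1
  rw [geom_sum_mul_of_one_le hm k] at h1
  have h3 : 1 ≤ m ^ k := Nat.one_le_pow _ _ (by omega)
  omega

private lemma digits_unique (m : ℕ) (hm : 2 ≤ m) :
    ∀ (k : ℕ) (b c : ℕ → ℕ), (∀ i < k, b i < m) → (∀ i < k, c i < m) →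
    (∑ i ∈ range k, b i * m ^ i = ∑ i ∈ range k, c i * m ^ i) → ∀ i < k, b i = c i := by
  intro k
  induction k with
  | zero => intro b c _ _ _ i hi; omega
  | succ k ih =>
    intro b c hb hc heq i hi
    rw [Finset.sum_range_succ, Finset.sum_range_succ] at heq
    have hB := digits_lt m (by omega) k b (fun i hi => hb i (by omega))
    have hC := digits_lt m (by omega) k c (fun i hi => hc i (by omega))
    have hpow : 0 < m ^ k := Nat.pow_pos (by omega)
    have h1 : (∑ i ∈ range k, b i * m ^ i + b k * m ^ k) / m ^ k = b k := by
      rw [Nat.add_mul_div_right _ _ hpow, Nat.div_eq_of_lt hB, zero_add]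
    have h2 : (∑ i ∈ range k, c i * m ^ i + c k * m ^ k) / m ^ k = c k := by
      rw [Nat.add_mul_div_right _ _ hpow, Nat.div_eq_of_lt hC, zero_add]
    have hbc : b k = c k := by rw [← h1, ← h2, heq]
    rcases Nat.lt_or_ge i k with hik | hik
    · rw [hbc] at heq
      have hlow : ∑ i ∈ range k, b i * m ^ i = ∑ i ∈ range k, c i * m ^ i :=
        Nat.add_right_cancel heq
      exact ih b c (fun i hi => hb i (by omega)) (fun i hi => hc i (by omega)) hlow i hik
    · have : i = k := by omega
      rw [this]; exact hbc

private lemma ceil_nat_div_pos {m q : ℕ} (hm : 0 < m) (hq : 0 < q) :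
    (1 : ℤ) ≤ ⌈(q : ℚ) / (m : ℚ)⌉ :=
  Int.ceil_pos.mpr (div_pos (by exact_mod_cast hq) (by exact_mod_cast hm))

private lemma key (m : ℕ) (hm : 2 ≤ m) (k : ℕ) (hk : 2 ≤ k) :
    ∀ (n : ℕ) (g : ℕ → ℕ), (∑ i ∈ range k, g i ≤ n) → (∃ i, i < k ∧ g i ≠ 0) →
    ((m ^ k - 1) / (m - 1) ∣ ∑ i ∈ range k, g i * m ^ i) →
    (k : ℤ) ≤ ∑ i ∈ range k, ⌈(g i : ℚ) / (m : ℚ)⌉ := by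
  have hm0 : (0 : ℚ) < (m : ℚ) := by exact_mod_cast (by omega : 0 < m)
  have hN : (m ^ k - 1) / (m - 1) = ∑ i ∈ range k, m ^ i := (Nat.geomSum_eq hm k).symm
  have hgeom : (∑ i ∈ range k, m ^ i) * (m - 1) = m ^ k - 1 :=
    geom_sum_mul_of_one_le (by omega) k
  intro n
  induction n with
  | zero =>
    rintro g hsum ⟨i, hik, hgi⟩ _
    exfalso
    have := Finset.single_le_sum (f := g) (fun _ _ => Nat.zero_le _) (mem_range.mpr hik)
    omega
  | succ n ih =>
    rintro g hsum ⟨iw, hiwk, hgw⟩ hdvd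
    by_cases hsmall : ∀ i < k, g i < m
    · -- terminal case: all digits < m
      rw [hN] at hdvd
      obtain ⟨q, hq⟩ := hdvd
      have hSpos : 0 < ∑ i ∈ range k, g i * m ^ i := by
        have h1 : g iw * m ^ iw ≤ ∑ i ∈ range k, g i * m ^ i :=
          Finset.single_le_sum (f := fun i => g i * m ^ i) (fun _ _ => Nat.zero_le _)
            (mem_range.mpr hiwk)
        have h2 : 0 < m ^ iw := Nat.pow_pos (by omega)
        have h3 : 0 < g iw * m ^ iw := Nat.mul_pos (by omega) h2
        omega
      have hNpos : 0 < ∑ i ∈ range k, m ^ i := by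
        have h1 : m ^ 0 ≤ ∑ i ∈ range k, m ^ i :=
          Finset.single_le_sum (f := fun i => m ^ i) (fun _ _ => Nat.zero_le _)
            (mem_range.mpr (by omega))
        simpa using Nat.lt_of_lt_of_le Nat.zero_lt_one (by simpa using h1)
      have hqpos : 0 < q := by
        rcases Nat.eq_zero_or_pos q with h | h
        · rw [h, mul_zero] at hq; omega
        · exact h
      have hSle : ∑ i ∈ range k, g i * m ^ i ≤ (∑ i ∈ range k, m ^ i) * (m - 1) := by
        rw [Finset.sum_mul]
        apply Finset.sum_le_sum
        intro i hi
        have hbi := hsmall i (mem_range.mp hi)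
        rw [mul_comm (g i) (m ^ i)]
        exact Nat.mul_le_mul le_rfl (by omega)
      have hqlt : q < m := by
        rw [hq] at hSle
        have := Nat.le_of_mul_le_mul_left hSle hNpos
        omega
      have hdig : ∀ i < k, g i = q := by
        apply digits_unique m hm k g (fun _ => q) hsmall (fun i _ => hqlt)
        rw [hq, mul_comm, Finset.mul_sum]
      calc (k : ℤ) = ∑ _i ∈ range k, (1 : ℤ) := by simp
        _ ≤ ∑ i ∈ range k, ⌈(g i : ℚ) / (m : ℚ)⌉ := by
            apply Finset.sum_le_sum
            intro i hi
            rw [hdig i (mem_range.mp hi)]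
            exact ceil_nat_div_pos (by omega) hqpos
    · -- carry case
      push_neg at hsmall
      obtain ⟨i0, hi0k, hi0m⟩ := hsmall
      set i1 : ℕ := if i0 + 1 < k then i0 + 1 else 0 with hi1def
      have hi1k : i1 < k := by rw [hi1def]; split <;> omega
      have hne : i0 ≠ i1 := by rw [hi1def]; split <;> omega
      set g' : ℕ → ℕ :=
        fun i => if i = i0 then g i0 - m else if i = i1 then g i1 + 1 else g i with hg'
      have hg'i0 : g' i0 = g i0 - m := by simp [hg']
      have hg'i1 : g' i1 = g i1 + 1 := by simp [hg', Ne.symm hne]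
      have hg'other : ∀ x, x ≠ i0 → x ≠ i1 → g' x = g x := by
        intro x h1 h2; simp [hg', h1, h2]
      have hi0mem : i0 ∈ range k := mem_range.mpr hi0k
      have hi1mem : i1 ∈ range k := mem_range.mpr hi1k
      have htail : ∀ {M : Type} [AddCommMonoid M] (F G : ℕ → M),
          (∀ x, x ≠ i0 → x ≠ i1 → F x = G x) →
          ∑ x ∈ ((range k).erase i0).erase i1, F x
            = ∑ x ∈ ((range k).erase i0).erase i1, G x := by
        intro M _ F G h
        apply Finset.sum_congr rfl
        intro x hx
        have h1 := (Finset.mem_erase.mp hx).1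
        have h2 := (Finset.mem_erase.mp (Finset.mem_erase.mp hx).2).1
        exact h x h2 h1
      -- plain sum decreases
      have e1 : ∑ i ∈ range k, g' i
          = g' i0 + g' i1 + ∑ x ∈ ((range k).erase i0).erase i1, g' x :=
        sum_split g' hi0mem hi1mem hne
      have e1' : ∑ i ∈ range k, g i
          = g i0 + g i1 + ∑ x ∈ ((range k).erase i0).erase i1, g x :=
        sum_split g hi0mem hi1mem hne
      have et1 : ∑ x ∈ ((range k).erase i0).erase i1, g' x
          = ∑ x ∈ ((range k).erase i0).erase i1, g x :=
        htail g' g hg'other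
      have hsum' : ∑ i ∈ range k, g' i ≤ n := by
        rw [e1, et1, hg'i0, hg'i1]
        rw [e1'] at hsum
        omega
      -- weighted sum
      have e2 : ∑ i ∈ range k, g' i * m ^ i
          = g' i0 * m ^ i0 + g' i1 * m ^ i1
            + ∑ x ∈ ((range k).erase i0).erase i1, g' x * m ^ x :=
        sum_split (fun i => g' i * m ^ i) hi0mem hi1mem hne
      have e2' : ∑ i ∈ range k, g i * m ^ i
          = g i0 * m ^ i0 + g i1 * m ^ i1
            + ∑ x ∈ ((range k).erase i0).erase i1, g x * m ^ x :=
        sum_split (fun i => g i * m ^ i) hi0mem hi1mem hne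
      have et2 : ∑ x ∈ ((range k).erase i0).erase i1, g' x * m ^ x
          = ∑ x ∈ ((range k).erase i0).erase i1, g x * m ^ x :=
        htail _ _ (fun x h1 h2 => by rw [hg'other x h1 h2])
      have hmul : m * m ^ i0 ≤ g i0 * m ^ i0 := Nat.mul_le_mul hi0m le_rfl
      have hsubmul : (g i0 - m) * m ^ i0 = g i0 * m ^ i0 - m * m ^ i0 := Nat.sub_mul _ _ _
      have hdvd' : (m ^ k - 1) / (m - 1) ∣ ∑ i ∈ range k, g' i * m ^ i := by
        by_cases hc : i0 + 1 < k
        · have h1 : i1 = i0 + 1 := by rw [hi1def, if_pos hc]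
          have hkey : g' i0 * m ^ i0 + g' i1 * m ^ i1 = g i0 * m ^ i0 + g i1 * m ^ i1 := by
            rw [hg'i0, hg'i1, h1, add_mul, one_mul, pow_succ, mul_comm (m ^ i0) m]
            omega
          have : ∑ i ∈ range k, g' i * m ^ i = ∑ i ∈ range k, g i * m ^ i := by
            rw [e2, e2', et2, hkey]
          rw [this]; exact hdvd
        · have h1 : i1 = 0 := by rw [hi1def, if_neg hc]
          have hpowk : m ^ k = m * m ^ i0 := by
            have : k = i0 + 1 := by omega
            rw [this, pow_succ, mul_comm]
          have h6 : 1 ≤ m ^ k := Nat.one_le_pow _ _ (by omega)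
          have hkey : g' i0 * m ^ i0 + g' i1 * m ^ i1 + (m ^ k - 1)
              = g i0 * m ^ i0 + g i1 * m ^ i1 := by
            rw [hg'i0, hg'i1, h1, pow_zero, mul_one, mul_one]
            omega
          have heqS : ∑ i ∈ range k, g i * m ^ i
              = ∑ i ∈ range k, g' i * m ^ i + (m ^ k - 1) := by
            rw [e2, e2', et2]
            omega
          have hdvdMk : (m ^ k - 1) / (m - 1) ∣ m ^ k - 1 :=
            ⟨m - 1, by rw [hN, hgeom]⟩
          have hS' : ∑ i ∈ range k, g' i * m ^ i
              = ∑ i ∈ range k, g i * m ^ i - (m ^ k - 1) := by omega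
          rw [hS']
          exact Nat.dvd_sub hdvd hdvdMk
      -- ceilings do not increase
      have e3 : ∑ i ∈ range k, ⌈(g' i : ℚ) / (m : ℚ)⌉
          = ⌈(g' i0 : ℚ) / (m : ℚ)⌉ + ⌈(g' i1 : ℚ) / (m : ℚ)⌉
            + ∑ x ∈ ((range k).erase i0).erase i1, ⌈(g' x : ℚ) / (m : ℚ)⌉ :=
        sum_split (fun i => ⌈(g' i : ℚ) / (m : ℚ)⌉) hi0mem hi1mem hne
      have e3' : ∑ i ∈ range k, ⌈(g i : ℚ) / (m : ℚ)⌉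
          = ⌈(g i0 : ℚ) / (m : ℚ)⌉ + ⌈(g i1 : ℚ) / (m : ℚ)⌉
            + ∑ x ∈ ((range k).erase i0).erase i1, ⌈(g x : ℚ) / (m : ℚ)⌉ :=
        sum_split (fun i => ⌈(g i : ℚ) / (m : ℚ)⌉) hi0mem hi1mem hne
      have et3 : ∑ x ∈ ((range k).erase i0).erase i1, ⌈(g' x : ℚ) / (m : ℚ)⌉
          = ∑ x ∈ ((range k).erase i0).erase i1, ⌈(g x : ℚ) / (m : ℚ)⌉ :=
        htail _ _ (fun x h1 h2 => by rw [hg'other x h1 h2])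
      have h7 : ⌈(g' i0 : ℚ) / (m : ℚ)⌉ = ⌈(g i0 : ℚ) / (m : ℚ)⌉ - 1 := by
        rw [hg'i0]
        have hcast : ((g i0 - m : ℕ) : ℚ) = (g i0 : ℚ) - (m : ℚ) := by
          push_cast [hi0m]; ring
        rw [hcast, sub_div, div_self (ne_of_gt hm0), Int.ceil_sub_one]
      have h8 : ⌈(g' i1 : ℚ) / (m : ℚ)⌉ ≤ ⌈(g i1 : ℚ) / (m : ℚ)⌉ + 1 := by
        rw [hg'i1]
        have hle : ((g i1 + 1 : ℕ) : ℚ) / (m : ℚ) ≤ (g i1 : ℚ) / (m : ℚ) + 1 := by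
          push_cast
          rw [add_div]
          have : (1 : ℚ) / (m : ℚ) ≤ 1 := by
            rw [div_le_one hm0]; exact_mod_cast (by omega : 1 ≤ m)
          linarith
        calc ⌈((g i1 + 1 : ℕ) : ℚ) / (m : ℚ)⌉ ≤ ⌈(g i1 : ℚ) / (m : ℚ) + 1⌉ :=
              Int.ceil_mono hle
          _ = ⌈(g i1 : ℚ) / (m : ℚ)⌉ + 1 := Int.ceil_add_one _
      have hceil : ∑ i ∈ range k, ⌈(g' i : ℚ) / (m : ℚ)⌉
          ≤ ∑ i ∈ range k, ⌈(g i : ℚ) / (m : ℚ)⌉ := by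
        rw [e3, e3', et3]
        omega
      have hih := ih g' hsum' ⟨i1, hi1k, by rw [hg'i1]; omega⟩ hdvd'
      omega

/-- If `m ≥ 2`, `k ≥ 1`, `a₁,…,a_k ∈ ℕ` are not all zero and
`a₁·m^{k-1} + ⋯ + a_k ≡ 0 (mod (m^k-1)/(m-1))`, then `∑ⱼ ⌈aⱼ/m⌉ ≥ k`. -/
theorem sum_ceil_ge (m k : ℕ) (hm : 2 ≤ m) (hk : 1 ≤ k) (a : Fin k → ℕ)
    (ha : ∃ j, a j ≠ 0)
    (hcong : (m ^ k - 1) / (m - 1) ∣ ∑ j : Fin k, a j * m ^ (k - 1 - (j : ℕ))) :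
    (k : ℤ) ≤ ∑ j : Fin k, ⌈(a j : ℚ) / (m : ℚ)⌉ := by
  rcases Nat.lt_or_ge k 2 with hk2 | hk2
  · -- k = 1
    have hk1 : k = 1 := by omega
    subst hk1
    obtain ⟨j, hj⟩ := ha
    have hj0 : j = 0 := Subsingleton.elim j 0
    rw [Fin.sum_univ_one]
    rw [hj0] at hj
    exact_mod_cast ceil_nat_div_pos (by omega : 0 < m) (by omega : 0 < a 0)
  · -- k ≥ 2, reindex
    set g : ℕ → ℕ := fun i => if h : i < k then a ⟨k - 1 - i, by omega⟩ else 0 with hg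
    have hga : ∀ j : Fin k, g (k - 1 - (j : ℕ)) = a j := by
      intro j
      have hj : (j : ℕ) < k := j.isLt
      have h1 : k - 1 - (j : ℕ) < k := by omega
      simp only [hg]
      rw [dif_pos h1]
      exact congrArg a (Fin.ext (by simp only []; omega))
    have hA : ∑ j : Fin k, a j * m ^ (k - 1 - (j : ℕ)) = ∑ i ∈ range k, g i * m ^ i := by
      calc ∑ j : Fin k, a j * m ^ (k - 1 - (j : ℕ))
          = ∑ j : Fin k, g (k - 1 - (j : ℕ)) * m ^ (k - 1 - (j : ℕ)) := by
            apply Finset.sum_congr rfl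
            intro j _
            rw [hga j]
        _ = ∑ i ∈ range k, g (k - 1 - i) * m ^ (k - 1 - i) :=
            Fin.sum_univ_eq_sum_range (fun i => g (k - 1 - i) * m ^ (k - 1 - i)) k
        _ = ∑ i ∈ range k, g i * m ^ i :=
            Finset.sum_range_reflect (fun i => g i * m ^ i) k
    have hB : ∑ j : Fin k, ⌈(a j : ℚ) / (m : ℚ)⌉ = ∑ i ∈ range k, ⌈(g i : ℚ) / (m : ℚ)⌉ := by
      calc ∑ j : Fin k, ⌈(a j : ℚ) / (m : ℚ)⌉
          = ∑ j : Fin k, ⌈(g (k - 1 - (j : ℕ)) : ℚ) / (m : ℚ)⌉ := by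
            apply Finset.sum_congr rfl
            intro j _
            rw [hga j]
        _ = ∑ i ∈ range k, ⌈(g (k - 1 - i) : ℚ) / (m : ℚ)⌉ :=
            Fin.sum_univ_eq_sum_range (fun i => ⌈(g (k - 1 - i) : ℚ) / (m : ℚ)⌉) k
        _ = ∑ i ∈ range k, ⌈(g i : ℚ) / (m : ℚ)⌉ :=
            Finset.sum_range_reflect (fun i => ⌈(g i : ℚ) / (m : ℚ)⌉) k
    obtain ⟨j0, hj0⟩ := ha
    have hex : ∃ i, i < k ∧ g i ≠ 0 := by
      refine ⟨k - 1 - (j0 : ℕ), by have := j0.isLt; omega, ?_⟩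
      rw [hga j0]; exact hj0
    rw [hB]
    rw [hA] at hcong
    exact key m hm k hk2 (∑ i ∈ range k, g i) g le_rfl hex hcong
end

section
/- Let m ≥ 2 and k ≥ 1 be integers, and let a₁, …, a_k ∈ ℕ be not all zero. If a₁·m^{k−1} + a₂·m^{k−2} + ⋯ + a_{k−1}·m + a_k ≡ 0 (mod m^k − 1), then the sum over j = 1, …, k of ⌊a_j / (m − 1)⌋ is at least k. -/
/-!
Reverse the indexing so that `a` becomes a little-endian digit string `b` with
`m ^ k - 1 ∣ ∑ bᵢ mⁱ`. While some digit satisfies `bᵢ ≥ m`, carry: subtract `m` from `bᵢ` and add `1`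
to the cyclically next digit. Since `m ^ k ≡ 1`, the value modulo `m ^ k - 1` is unchanged, the digit
sum drops by `m - 1` and `∑ ⌊bᵢ / (m - 1)⌋` does not increase. When no carry is possible, the value is
a positive multiple of `m ^ k - 1` but at most `∑ (m - 1) mⁱ = m ^ k - 1`, which forces every digit to
be `m - 1`, so the floor sum is exactly `k`.
-/

open Finset

theorem Fintype.sum_comp_add_single {ι M : Type*} [Fintype ι] [DecidableEq ι] [AddCommMonoid M]
    (f : ℕ → M) (c : ι → ℕ) (j : ι) (v : ℕ) :
    ∑ i, f ((c + Pi.single j v : ι → ℕ) i) + f (c j) = ∑ i, f (c i) + f (c j + v) := by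
  have hrest : ∑ i ∈ univ.erase j, f ((c + Pi.single j v : ι → ℕ) i) =
      ∑ i ∈ univ.erase j, f (c i) :=
    Finset.sum_congr rfl fun i hi => by simp [ne_of_mem_erase hi]
  rw [← add_sum_erase _ _ (mem_univ j), ← add_sum_erase _ _ (mem_univ j), hrest, Pi.add_apply,
    Pi.single_eq_same]
  abel

theorem sum_add_single_div_le {ι : Type*} [Fintype ι] [DecidableEq ι] {d m : ℕ} (hd : 0 < d)
    (hdm : d ≤ m) (c : ι → ℕ) (i j : ι) :
    ∑ l, (c + Pi.single i 1 : ι → ℕ) l / d ≤ ∑ l, (c + Pi.single j m : ι → ℕ) l / d := by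
  have hi := Fintype.sum_comp_add_single (· / d) c i 1
  have hj := Fintype.sum_comp_add_single (· / d) c j m
  have hsucc : (c i + 1) / d ≤ c i / d + 1 :=
    (Nat.div_le_div_right (by omega)).trans_eq (Nat.add_div_right _ hd)
  have hstep : c j / d + 1 ≤ (c j + m) / d :=
    (Nat.add_div_right _ hd).symm.trans_le (Nat.div_le_div_right (by omega))
  omega

theorem ZMod.natCast_pow_eq_one {m : ℕ} (hm : 0 < m) (k : ℕ) :
    (m : ZMod (m ^ k - 1)) ^ k = 1 := by
  have h := ZMod.natCast_self (m ^ k - 1)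
  rw [Nat.cast_sub (Nat.one_le_pow _ _ hm)] at h
  push_cast at h
  exact sub_eq_zero.mp h

theorem sum_add_single_succ_mul_pow {R : Type*} [CommSemiring R] {m k : ℕ} [NeZero k]
    (hm : (m : R) ^ k = 1) (c : Fin k → ℕ) (i : Fin k) :
    ∑ l, ((c + Pi.single (i + 1) 1 : Fin k → ℕ) l : R) * m ^ (l : ℕ) =
      ∑ l, ((c + Pi.single i m : Fin k → ℕ) l : R) * m ^ (l : ℕ) := by
  have hshift : (m : R) ^ ((i + 1 : Fin k) : ℕ) = m ^ ((i : ℕ) + 1) := by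
    rw [pow_eq_pow_mod ((i : ℕ) + 1) hm, Fin.val_add, Fin.val_one', Nat.add_mod_mod]
  simp [Pi.single_apply, add_mul, sum_add_distrib, hshift, pow_succ']

theorem eq_pred_of_le_pred_of_dvd {m k : ℕ} (hm : 1 ≤ m) (b : Fin k → ℕ) (hb : b ≠ 0)
    (hle : ∀ i, b i ≤ m - 1) (hdvd : m ^ k - 1 ∣ ∑ i, b i * m ^ (i : ℕ)) (i : Fin k) :
    b i = m - 1 := by
  have hgeom : ∑ i : Fin k, (m - 1) * m ^ (i : ℕ) = m ^ k - 1 := by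
    rw [Fin.sum_univ_eq_sum_range (fun i => (m - 1) * m ^ i), ← mul_sum, mul_comm,
      geom_sum_mul_of_one_le hm]
  have hterm : ∀ i ∈ univ, b i * m ^ (i : ℕ) ≤ (m - 1) * m ^ (i : ℕ) :=
    fun i _ => Nat.mul_le_mul_right _ (hle i)
  have hpos : 0 < ∑ i, b i * m ^ (i : ℕ) := by
    obtain ⟨j, hj⟩ := Function.ne_iff.mp hb
    exact sum_pos' (fun _ _ => Nat.zero_le _)
      ⟨j, mem_univ j, Nat.mul_pos (Nat.pos_of_ne_zero hj) (Nat.pow_pos hm)⟩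
  have heq := le_antisymm (sum_le_sum hterm) (hgeom ▸ Nat.le_of_dvd hpos hdvd)
  exact Nat.eq_of_mul_eq_mul_right (Nat.pow_pos hm)
    ((sum_eq_sum_iff_of_le hterm).mp heq i (mem_univ i))

theorem le_sum_div_pred_of_dvd {m k : ℕ} (hm : 2 ≤ m) (b : Fin k → ℕ) (hb : b ≠ 0)
    (hdvd : m ^ k - 1 ∣ ∑ i, b i * m ^ (i : ℕ)) : k ≤ ∑ i, b i / (m - 1) := by
  induction hs : ∑ i, b i using Nat.strong_induction_on generalizing b with
  | _ s ih =>
  by_cases hsmall : ∀ i, b i ≤ m - 1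
  · simp [eq_pred_of_le_pred_of_dvd (by omega) b hb hsmall hdvd,
      Nat.div_self (by omega : 0 < m - 1)]
  push Not at hsmall
  obtain ⟨i, hi⟩ := hsmall
  have : NeZero k := ⟨i.pos.ne'⟩
  obtain ⟨c, rfl⟩ : ∃ c, b = c + Pi.single i m :=
    ⟨b - Pi.single i m, (tsub_add_cancel_of_le fun l => by
      rcases eq_or_ne l i with rfl | hl
      · simp only [Pi.single_eq_same]; omega
      · simp [hl]).symm⟩
  refine (ih (∑ l, (c + Pi.single (i + 1) 1 : Fin k → ℕ) l) ?_ _ ?_ ?_ rfl).trans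
    (sum_add_single_div_le (by omega) (by omega) c (i + 1) i)
  · simp [← hs, sum_add_distrib]
    omega
  · exact Function.ne_iff.mpr ⟨i + 1, by simp⟩
  · rw [← ZMod.natCast_eq_zero_iff] at hdvd ⊢
    simp only [Nat.cast_sum, Nat.cast_mul, Nat.cast_pow] at hdvd ⊢
    rwa [sum_add_single_succ_mul_pow (ZMod.natCast_pow_eq_one (by omega) k)]

theorem sum_floor_ge_general (m k : ℕ) (hm : 2 ≤ m) (a : Fin k → ℕ)
    (ha : ∃ j, a j ≠ 0)
    (hcong : m ^ k - 1 ∣ ∑ j : Fin k, a j * m ^ (k - 1 - (j : ℕ))) :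
    (k : ℤ) ≤ ∑ j : Fin k, ⌊(a j : ℚ) / ((m : ℚ) - 1)⌋ := by
  have hfloor (j : Fin k) : ⌊(a j : ℚ) / ((m : ℚ) - 1)⌋ = ((a j / (m - 1) : ℕ) : ℤ) := by
    rw [← Nat.cast_pred (by omega), Rat.floor_natCast_div_natCast, Int.natCast_div]
  simp_rw [hfloor]
  norm_cast
  have hexp (i : Fin k) : k - 1 - (i.rev : ℕ) = i := by
    rw [Fin.val_rev]
    omega
  rw [← Equiv.sum_comp Fin.revPerm] at hcong ⊢
  simp only [Fin.revPerm_apply, hexp] at hcong ⊢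
  obtain ⟨j, hj⟩ := ha
  exact le_sum_div_pred_of_dvd hm (fun i => a i.rev) (Function.ne_iff.mpr ⟨j.rev, by simpa⟩) hcong

/-- If `m ≥ 2`, `k ≥ 1`, `a₁,…,a_k ∈ ℕ` are not all zero and
`a₁·m^{k-1} + ⋯ + a_k ≡ 0 (mod m^k - 1)`, then `∑ⱼ ⌊aⱼ/(m-1)⌋ ≥ k`. -/
theorem sum_floor_ge (m k : ℕ) (hm : 2 ≤ m) (hk : 1 ≤ k) (a : Fin k → ℕ)
    (ha : ∃ j, a j ≠ 0)
    (hcong : m ^ k - 1 ∣ ∑ j : Fin k, a j * m ^ (k - 1 - (j : ℕ))) :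
    (k : ℤ) ≤ ∑ j : Fin k, ⌊(a j : ℚ) / ((m : ℚ) - 1)⌋ :=
  sum_floor_ge_general m k hm a ha hcong
end

section
/- Let n, m, k be positive integers with m ≥ 2. Then the number of nonzero digits in the base-m expansion of n·(m^k − 1)/(m − 1) is at least k. -/
/-! If `R = 1 + m + ⋯ + m^(k-1)`, then `m^k ≡ 1 [MOD R]`, so writing a multiple `N ≥ m^k` of `R`
as `N = r + m^k t` with `r < m^k`, the number `r + t < N` is again a multiple of `R`. The digits of
`N` are those of `r`, padded with zeros, followed by those of `t`, and adding numbers can only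
lose nonzero digits, so `r + t` has at most as many nonzero digits as `N`. Descending in this way
we reach a multiple `q R < m^k`, i.e. `0 < q < m`, whose digits are `k` copies of `q`. -/

open Finset

def nonzeroDigitCount (b n : ℕ) : ℕ := ((Nat.digits b n).filter (fun d => d ≠ 0)).length

section

variable {b : ℕ}

@[simp]
theorem nonzeroDigitCount_zero (b : ℕ) : nonzeroDigitCount b 0 = 0 := by
  simp [nonzeroDigitCount]

theorem nonzeroDigitCount_add_base_mul (hb : 1 < b) {r : ℕ} (hr : r < b) (q : ℕ) :
    nonzeroDigitCount b (r + b * q) = (if r = 0 then 0 else 1) + nonzeroDigitCount b q := by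
  by_cases h : r = 0 ∧ q = 0
  · simp [h]
  unfold nonzeroDigitCount
  rw [Nat.digits_add b hb r q hr (by tauto)]
  by_cases hr0 : r = 0 <;> simp [hr0, add_comm]

theorem nonzeroDigitCount_add_base_pow_mul (hb : 1 < b) {k r : ℕ} (hr : r < b ^ k) (t : ℕ) :
    nonzeroDigitCount b (r + b ^ k * t) = nonzeroDigitCount b r + nonzeroDigitCount b t := by
  rcases eq_or_ne t 0 with rfl | ht
  · simp
  obtain ⟨j, hj⟩ := Nat.exists_eq_add_of_le ((Nat.digits_length_le_iff hb r).2 hr)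
  unfold nonzeroDigitCount
  rw [hj, ← Nat.digits_append_zeroes_append_digits hb (Nat.pos_of_ne_zero ht)]
  simp [List.filter_append]

theorem nonzeroDigitCount_add_add_le (hb : 1 < b) (x y : ℕ) {c : ℕ} (hc : c ≤ 1) :
    nonzeroDigitCount b (x + y + c) ≤ nonzeroDigitCount b x + nonzeroDigitCount b y + c := by
  rcases Nat.eq_zero_or_pos (x + y + c) with h | h
  · obtain ⟨rfl, rfl, rfl⟩ : x = 0 ∧ y = 0 ∧ c = 0 := by omega
    simp
  have hb0 : 0 < b := by omega
  set s := x % b + y % b + c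
  have hx := Nat.mod_add_div x b
  have hy := Nat.mod_add_div y b
  have hs := Nat.mod_add_div s b
  have hcarry : s / b ≤ 1 := by
    have := Nat.mod_lt x hb0; have := Nat.mod_lt y hb0
    exact Nat.lt_succ_iff.1 ((Nat.div_lt_iff_lt_mul hb0).2 (by omega))
  have hdigit : (if s % b = 0 then 0 else 1) + s / b ≤
      (if x % b = 0 then 0 else 1) + (if y % b = 0 then 0 else 1) + c := by
    have := Nat.mod_lt x hb0; have := Nat.mod_lt y hb0
    interval_cases hq : s / b <;> split_ifs <;> omega
  have hsplit : x + y + c = s % b + b * (x / b + y / b + s / b) := by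
    rw [mul_add, mul_add]
    linarith [show s = x % b + y % b + c from rfl]
  have hdecr : x / b + y / b + s / b < x + y + c := by
    have := Nat.mul_le_mul_right (x / b + y / b + s / b) hb
    omega
  have ih := nonzeroDigitCount_add_add_le hb (x / b) (y / b) hcarry
  have hx' := nonzeroDigitCount_add_base_mul hb (Nat.mod_lt x hb0) (x / b)
  have hy' := nonzeroDigitCount_add_base_mul hb (Nat.mod_lt y hb0) (y / b)
  rw [hx] at hx'
  rw [hy] at hy'
  rw [hsplit, nonzeroDigitCount_add_base_mul hb (Nat.mod_lt s hb0)]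
  omega
termination_by x + y + c
decreasing_by exact hdecr

theorem nonzeroDigitCount_add_le (hb : 1 < b) (x y : ℕ) :
    nonzeroDigitCount b (x + y) ≤ nonzeroDigitCount b x + nonzeroDigitCount b y := by
  simpa using nonzeroDigitCount_add_add_le hb x y (Nat.zero_le 1)

theorem pow_modEq_one_geom_sum (b k : ℕ) : b ^ k ≡ 1 [MOD ∑ i ∈ range k, b ^ i] :=
  (Nat.modEq_iff_dvd.2 ⟨(b : ℤ) - 1, by push_cast; exact (geom_sum_mul _ _).symm⟩).symm

theorem nonzeroDigitCount_mul_geom_sum (hb : 1 < b) {q : ℕ} (hq0 : q ≠ 0) (hqb : q < b) (k : ℕ) :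
    nonzeroDigitCount b (q * ∑ i ∈ range k, b ^ i) = k := by
  induction k with
  | zero => simp
  | succ k ih =>
    rw [geom_sum_succ, mul_add_one, add_comm, mul_left_comm,
      nonzeroDigitCount_add_base_mul hb hqb, ih, if_neg hq0, add_comm]

theorem le_nonzeroDigitCount_of_geom_sum_dvd (hb : 1 < b) {k N : ℕ} (hN : N ≠ 0)
    (hdvd : ∑ i ∈ range k, b ^ i ∣ N) : k ≤ nonzeroDigitCount b N := by
  rcases eq_or_ne k 0 with rfl | hk
  · exact Nat.zero_le _
  set R := ∑ i ∈ range k, b ^ i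
  by_cases hNk : N < b ^ k
  · obtain ⟨q, rfl⟩ := hdvd
    have hRpos : 0 < R := Nat.pos_of_ne_zero (left_ne_zero_of_mul hN)
    have hRb : R * (b - 1) + 1 = b ^ k := by
      simpa [Nat.sub_add_cancel hb.le] using geom_sum_mul_add (b - 1) k
    have hqb : q < b := by
      have : q ≤ b - 1 := Nat.le_of_mul_le_mul_left (by omega : R * q ≤ R * (b - 1)) hRpos
      omega
    rw [mul_comm, nonzeroDigitCount_mul_geom_sum hb (right_ne_zero_of_mul hN) hqb]
  obtain ⟨r, t, hr, hNrt⟩ : ∃ r t, r < b ^ k ∧ N = r + b ^ k * t :=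
    ⟨N % b ^ k, N / b ^ k, Nat.mod_lt _ (by positivity), (Nat.mod_add_div _ _).symm⟩
  have ht : 0 < t := by
    refine Nat.pos_of_ne_zero fun ht => hNk ?_
    simpa [hNrt, ht] using hr
  have hfold : r + t ≡ N [MOD R] := by
    simpa [hNrt] using (((pow_modEq_one_geom_sum b k).mul_right t).add_left r).symm
  have hdecr : r + t < N := by
    have := Nat.mul_lt_mul_of_pos_right (Nat.one_lt_pow hk hb) ht
    omega
  calc k ≤ nonzeroDigitCount b (r + t) :=
        le_nonzeroDigitCount_of_geom_sum_dvd hb (by omega)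
          (Nat.modEq_zero_iff_dvd.1 (hfold.trans (Nat.modEq_zero_iff_dvd.2 hdvd)))
    _ ≤ nonzeroDigitCount b r + nonzeroDigitCount b t := nonzeroDigitCount_add_le hb r t
    _ = nonzeroDigitCount b N := by rw [hNrt, nonzeroDigitCount_add_base_pow_mul hb hr t]
termination_by N
decreasing_by exact hdecr

end

/-- For positive integers `n, m, k` with `m ≥ 2`, the number of nonzero digits in the
base-`m` expansion of `n·(m^k - 1)/(m - 1)` is at least `k`. -/
theorem count_nonzero_digits_ge (n m k : ℕ) (hn : 0 < n) (hm : 2 ≤ m) (hk : 0 < k) :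
    k ≤ ((Nat.digits m (n * ((m ^ k - 1) / (m - 1)))).filter (fun d => d ≠ 0)).length := by
  rw [← Nat.geomSum_eq hm]
  have hR : 0 < ∑ i ∈ range k, m ^ i := geom_sum_pos (Nat.zero_le m) hk.ne'
  exact le_nonzeroDigitCount_of_geom_sum_dvd hm (mul_pos hn hR).ne' (dvd_mul_left _ _)
end

section
/- Let n, m, k be positive integers with m ≥ 2. Then the sum of all digits in the base-m expansion of (m^k − 1)·n is at least k·(m − 1). -/
/-!
Write a positive multiple `N` of `m ^ k - 1` as `N = q * m ^ k + r` with `r < m ^ k`. The digits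
of `N` are those of `r` followed by those of `q`, so its digit sum is `s(r) + s(q) ≥ s(r + q)`,
the digit sum being subadditive. Since `m ^ k ≡ 1`, `r + q` is again a positive multiple of
`m ^ k - 1`, and it is smaller than `N` as long as `q ≠ 0`. Descending, one reaches a multiple
below `m ^ k`, which can only be `m ^ k - 1`, whose digit sum is `k * (m - 1)`.
-/

open Finset

namespace Nat

theorem sub_one_mul_sum_div_pow_eq_sub_sum_digits_of_log_lt {b : ℕ} (hb : 1 < b) (x : ℕ)
    {M : ℕ} (hM : log b x < M) :
    (b - 1) * ∑ i ∈ range M, x / b ^ (i + 1) = x - (digits b x).sum := by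
  rw [← sub_one_mul_sum_log_div_pow_eq_sub_sum_digits x]
  congr 1
  refine (sum_subset (by simpa using hM) fun i _ hi => div_eq_of_lt ?_).symm
  simp only [mem_range, not_lt] at hi
  calc x < b ^ (log b x + 1) := lt_pow_succ_log_self hb x
    _ ≤ b ^ (i + 1) := pow_le_pow_right₀ hb.le (by omega)

theorem digits_sum_add_le {b : ℕ} (hb : 1 < b) (x y : ℕ) :
    (digits b (x + y)).sum ≤ (digits b x).sum + (digits b y).sum := by
  set M := log b (x + y) + 1
  have hlog : ∀ z ≤ x + y, log b z < M := fun z hz => by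
    have := log_mono_right (b := b) hz; omega
  have hx := sub_one_mul_sum_div_pow_eq_sub_sum_digits_of_log_lt hb x (hlog x (by omega))
  have hy := sub_one_mul_sum_div_pow_eq_sub_sum_digits_of_log_lt hb y (hlog y (by omega))
  have hxy := sub_one_mul_sum_div_pow_eq_sub_sum_digits_of_log_lt hb (x + y) (hlog _ le_rfl)
  have hdiv : ∑ i ∈ range M, (x / b ^ (i + 1) + y / b ^ (i + 1)) ≤
      ∑ i ∈ range M, (x + y) / b ^ (i + 1) :=
    sum_le_sum fun _ _ => div_add_div_le_add_div
  have := Nat.mul_le_mul_left (b - 1) hdiv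
  rw [sum_add_distrib, mul_add, hx, hy, hxy] at this
  have := digit_sum_le b x
  have := digit_sum_le b y
  have := digit_sum_le b (x + y)
  omega

theorem digits_sum_add_base_pow_mul {b k r : ℕ} (hb : 1 < b) (hr : r < b ^ k) (q : ℕ) :
    (digits b (r + b ^ k * q)).sum = (digits b r).sum + (digits b q).sum := by
  rcases q.eq_zero_or_pos with rfl | hq
  · simp
  have hlen : (digits b r).length ≤ k := (digits_length_le_iff hb r).mpr hr
  rw [← Nat.add_sub_cancel' hlen, ← digits_append_zeroes_append_digits hb hq]
  simp

theorem digits_sum_base_pow_sub_one {b : ℕ} (hb : 1 < b) (k : ℕ) :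
    (digits b (b ^ k - 1)).sum = k * (b - 1) := by
  induction k with
  | zero => simp
  | succ k ih =>
    have hsplit : b ^ (k + 1) - 1 = (b - 1) + b ^ 1 * (b ^ k - 1) := by
      have h1 : 1 ≤ b ^ k := one_le_pow k b (by omega)
      have h2 : 1 ≤ b * b ^ k := by nlinarith
      rw [pow_succ', pow_one]
      zify [h1, h2, (by omega : 1 ≤ b)]
      ring
    rw [hsplit, digits_sum_add_base_pow_mul hb (by rw [pow_one]; omega), ih,
      digits_of_lt b (b - 1) (by omega) (by omega)]
    simp only [List.sum_singleton]
    ring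

theorem mul_sub_one_le_digits_sum_of_dvd {b k : ℕ} (hb : 1 < b) (hk : 0 < k) {N : ℕ}
    (hdvd : b ^ k - 1 ∣ N) (hN : 0 < N) : k * (b - 1) ≤ (digits b N).sum := by
  induction N using Nat.strong_induction_on with
  | _ N ih =>
  have hbk : 1 < b ^ k := one_lt_pow hk.ne' hb
  obtain ⟨q, r, hr, rfl⟩ : ∃ q r, r < b ^ k ∧ N = r + b ^ k * q :=
    ⟨N / b ^ k, N % b ^ k, mod_lt N (by omega), (mod_add_div N (b ^ k)).symm⟩
  rcases q.eq_zero_or_pos with rfl | hq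
  · have hr_eq : r = b ^ k - 1 := eq_of_dvd_of_lt_two_mul (by simpa using hN.ne') (by simpa using hdvd)
      (by omega)
    rw [mul_zero, add_zero, hr_eq, digits_sum_base_pow_sub_one hb]
  have hrq_dvd : b ^ k - 1 ∣ r + q := by
    have hmod : r + b ^ k * q ≡ r + q [MOD b ^ k - 1] := by
      simpa using ((modEq_sub hbk.le).mul_right q).add_left r
    exact (hmod.dvd_iff dvd_rfl).mp hdvd
  have hrq_lt : r + q < r + b ^ k * q := by nlinarith
  calc k * (b - 1) ≤ (digits b (r + q)).sum := ih _ hrq_lt hrq_dvd (by omega)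
    _ ≤ (digits b r).sum + (digits b q).sum := digits_sum_add_le hb r q
    _ = (digits b (r + b ^ k * q)).sum := (digits_sum_add_base_pow_mul hb hr q).symm

end Nat

/-- For positive integers `n, m, k` with `m ≥ 2`, the sum of all digits in the
base-`m` expansion of `(m^k - 1)·n` is at least `k·(m - 1)`. -/
theorem digit_sum_ge (n m k : ℕ) (hn : 0 < n) (hm : 2 ≤ m) (hk : 0 < k) :
    k * (m - 1) ≤ (Nat.digits m ((m ^ k - 1) * n)).sum := by
  have hmk : 1 < m ^ k := Nat.one_lt_pow hk.ne' hm
  exact Nat.mul_sub_one_le_digits_sum_of_dvd hm hk (dvd_mul_right _ n)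
    (Nat.mul_pos (by omega) hn)
end
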